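/- arXiv:1909.11739 — 9 statements merged into one kernel-verified Lean document; each statement's English description precedes it below -/
import Mathlib

section
/- If → and ⇝ are G-transfer systems, then the reflexive-transitive closure of their union → ∪ ⇝ is a G-transfer system, and it is the least transfer system containing both → and ⇝ (i.e., it is their join in the lattice of G-transfer systems ordered by refinement). -/
/-- Conjugation of a subgroup: `gKg⁻¹`. -/
def conjSub {G : Type*} [Group G] (g : G) (K : Subgroup G) : Subgroup G :=
  Subgroup.map (MulAut.conj g).toMonoidHom K

/-- A `G`-transfer system: a partial order on subgroups refining inclusion,
closed under conjugation and restriction. -/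
def IsTransferSystem {G : Type*} [Group G] (R : Subgroup G → Subgroup G → Prop) : Prop :=
  (∀ H, R H H) ∧
  (∀ ⦃K H⦄, R K H → R H K → K = H) ∧
  (∀ ⦃K J H⦄, R K J → R J H → R K H) ∧
  (∀ ⦃K H⦄, R K H → K ≤ H) ∧
  (∀ ⦃K H⦄ (g : G), R K H → R (conjSub g K) (conjSub g H)) ∧
  (∀ ⦃K H⦄, R K H → ∀ ⦃L⦄, L ≤ H → R (L ⊓ K) L)

/-- `TL` is the transfer system generated by the relation `R`:
the least transfer system containing `R`. -/
def IsGenBy {G : Type*} [Group G] (TL R : Subgroup G → Subgroup G → Prop) : Prop :=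
  IsTransferSystem TL ∧ (∀ K H, R K H → TL K H) ∧
    ∀ T, IsTransferSystem T → (∀ K H, R K H → T K H) → ∀ K H, TL K H → T K H

theorem stmt1 {G : Type*} [Group G] [Finite G]
    (R S : Subgroup G → Subgroup G → Prop)
    (hR : IsTransferSystem R) (hS : IsTransferSystem S) :
    IsTransferSystem (Relation.ReflTransGen (fun K H => R K H ∨ S K H)) ∧
    (∀ K H, R K H → Relation.ReflTransGen (fun K H => R K H ∨ S K H) K H) ∧
    (∀ K H, S K H → Relation.ReflTransGen (fun K H => R K H ∨ S K H) K H) ∧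
    (∀ T : Subgroup G → Subgroup G → Prop, IsTransferSystem T →
      (∀ K H, R K H → T K H) → (∀ K H, S K H → T K H) →
      ∀ K H, Relation.ReflTransGen (fun K H => R K H ∨ S K H) K H → T K H) := by
  obtain ⟨-, -, -, hRle, hRconj, hRres⟩ := hR
  obtain ⟨-, -, -, hSle, hSconj, hSres⟩ := hS
  set U : Subgroup G → Subgroup G → Prop := fun K H => R K H ∨ S K H with hU
  have hUle : ∀ ⦃K H⦄, U K H → K ≤ H := fun K H h => h.elim (fun h => hRle h) (fun h => hSle h)
  have hle : ∀ ⦃K H⦄, Relation.ReflTransGen U K H → K ≤ H := by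
    intro K H h
    induction h with
    | refl => exact le_rfl
    | tail _ hst ih => exact ih.trans (hUle hst)
  have hres : ∀ ⦃K H⦄, Relation.ReflTransGen U K H → ∀ ⦃L⦄, L ≤ H →
      Relation.ReflTransGen U (L ⊓ K) L := by
    intro K H h
    induction h using Relation.ReflTransGen.head_induction_on with
    | refl => intro L hL; rw [inf_eq_left.mpr hL]
    | head hKJ hJH ih =>
      rename_i K J
      intro L hL
      have h1 : U ((L ⊓ J) ⊓ K) (L ⊓ J) := by
        rcases hKJ with h | h
        · exact Or.inl (hRres h inf_le_right)
        · exact Or.inr (hSres h inf_le_right)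
      have hKJ' : K ≤ J := hUle hKJ
      have he : (L ⊓ J) ⊓ K = L ⊓ K := by
        apply le_antisymm
        · exact inf_le_inf_right _ inf_le_left
        · exact le_inf (le_inf inf_le_left (inf_le_right.trans hKJ')) inf_le_right
      rw [he] at h1
      exact Relation.ReflTransGen.head h1 (ih hL)
  refine ⟨⟨fun H => Relation.ReflTransGen.refl,
    fun K H h1 h2 => le_antisymm (hle h1) (hle h2),
    fun K J H h1 h2 => h1.trans h2,
    hle,
    ?_, hres⟩,
    fun K H h => Relation.ReflTransGen.single (Or.inl h),
    fun K H h => Relation.ReflTransGen.single (Or.inr h),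
    ?_⟩
  · intro K H g h
    induction h with
    | refl => exact Relation.ReflTransGen.refl
    | tail _ hst ih =>
      refine ih.tail ?_
      rcases hst with h | h
      · exact Or.inl (hRconj g h)
      · exact Or.inr (hSconj g h)
  · intro T hT hTR hTS K H h
    induction h with
    | refl => exact hT.1 _
    | tail _ hst ih =>
      rcases hst with h | h
      · exact hT.2.2.1 ih (hTR _ _ h)
      · exact hT.2.2.1 ih (hTS _ _ h)
end

section
/- Let ≤ be a partial order on Sub(G) that refines inclusion. Define a relation R by: (K,H) ∈ R if and only if K ⊆ H and for all g ∈ G and all subgroups L ⊆ gHg⁻¹, one has gKg⁻¹ ∩ L ≤ L. Then R is a G-transfer system. -/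
lemma mem_conjSub {G : Type*} [Group G] {g x : G} {K : Subgroup G} :
    x ∈ conjSub g K ↔ g⁻¹ * x * g ∈ K := by
  constructor
  · rintro ⟨y, hy, rfl⟩
    simpa [MulAut.conj, mul_assoc] using hy
  · intro h
    exact ⟨g⁻¹ * x * g, h, by simp [MulAut.conj, mul_assoc]⟩

lemma conjSub_mono {G : Type*} [Group G] (g : G) {K H : Subgroup G} (h : K ≤ H) :
    conjSub g K ≤ conjSub g H := Subgroup.map_mono h

lemma conjSub_conjSub {G : Type*} [Group G] (g c : G) (K : Subgroup G) :
    conjSub g (conjSub c K) = conjSub (g * c) K := by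
  ext x
  simp only [mem_conjSub, mul_inv_rev, mul_assoc]

lemma conjSub_inf {G : Type*} [Group G] (g : G) (K L : Subgroup G) :
    conjSub g (K ⊓ L) = conjSub g K ⊓ conjSub g L := by
  ext x
  simp [mem_conjSub]

theorem stmt2 {G : Type*} [Group G] [Finite G]
    (le : Subgroup G → Subgroup G → Prop)
    (hrefl : ∀ H, le H H)
    (hanti : ∀ K H, le K H → le H K → K = H)
    (htrans : ∀ K J H, le K J → le J H → le K H)
    (hsub : ∀ K H, le K H → K ≤ H) :
    IsTransferSystem (fun K H => K ≤ H ∧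
      ∀ (g : G) (L : Subgroup G), L ≤ conjSub g H → le (conjSub g K ⊓ L) L) := by
  refine ⟨?_, ?_, ?_, ?_, ?_, ?_⟩
  · -- reflexivity
    intro H
    refine ⟨le_rfl, fun g L hL => ?_⟩
    rw [inf_eq_right.mpr hL]
    exact hrefl L
  · -- antisymmetry
    rintro K H ⟨h1, -⟩ ⟨h2, -⟩
    exact le_antisymm h1 h2
  · -- transitivity
    rintro K J H ⟨hKJ, hKJ'⟩ ⟨hJH, hJH'⟩
    refine ⟨hKJ.trans hJH, fun g L hL => ?_⟩
    have h1 : le (conjSub g J ⊓ L) L := hJH' g L hL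
    have h2 : le (conjSub g K ⊓ (conjSub g J ⊓ L)) (conjSub g J ⊓ L) :=
      hKJ' g (conjSub g J ⊓ L) inf_le_left
    have key : conjSub g K ⊓ (conjSub g J ⊓ L) = conjSub g K ⊓ L := by
      rw [← inf_assoc, inf_eq_left.mpr (conjSub_mono g hKJ)]
    rw [key] at h2
    exact htrans _ _ _ h2 h1
  · -- refines inclusion
    rintro K H ⟨h1, -⟩
    exact h1
  · -- conjugation
    rintro K H c ⟨h1, h2⟩
    refine ⟨conjSub_mono c h1, fun g L hL => ?_⟩
    rw [conjSub_conjSub] at hL ⊢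
    exact h2 (g * c) L hL
  · -- restriction
    rintro K H ⟨h1, h2⟩ L hLH
    refine ⟨inf_le_left, fun g M hM => ?_⟩
    have hM' : M ≤ conjSub g H := hM.trans (conjSub_mono g hLH)
    have key : conjSub g (L ⊓ K) ⊓ M = conjSub g K ⊓ M := by
      rw [conjSub_inf, inf_assoc, inf_comm (conjSub g K) M, ← inf_assoc,
        inf_eq_right.mpr hM, inf_comm]
    rw [key]
    exact h2 g M hM'
end

section
/- The relation ⟩≤⟨ defined from a partial order ≤ on Sub(G) refining inclusion is transitive: if (K,J) and (J,H) both belong to ⟩≤⟨, then (K,H) belongs to ⟩≤⟨. -/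
theorem stmt4 {G : Type*} [Group G] [Finite G]
    (le : Subgroup G → Subgroup G → Prop)
    (hrefl : ∀ H, le H H)
    (hanti : ∀ K H, le K H → le H K → K = H)
    (htrans : ∀ K J H, le K J → le J H → le K H)
    (hsub : ∀ K H, le K H → K ≤ H)
    (K J H : Subgroup G)
    (h1 : K ≤ J ∧ ∀ (g : G) (L : Subgroup G), L ≤ conjSub g J → le (conjSub g K ⊓ L) L)
    (h2 : J ≤ H ∧ ∀ (g : G) (L : Subgroup G), L ≤ conjSub g H → le (conjSub g J ⊓ L) L) :
    K ≤ H ∧ ∀ (g : G) (L : Subgroup G), L ≤ conjSub g H → le (conjSub g K ⊓ L) L := by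
  obtain ⟨hKJ, hK⟩ := h1
  obtain ⟨hJH, hJ⟩ := h2
  refine ⟨hKJ.trans hJH, fun g L hL => ?_⟩
  have hL' : conjSub g J ⊓ L ≤ conjSub g J := inf_le_left
  have s1 : le (conjSub g K ⊓ (conjSub g J ⊓ L)) (conjSub g J ⊓ L) := hK g _ hL'
  have s2 : le (conjSub g J ⊓ L) L := hJ g L hL
  have hKJc : conjSub g K ≤ conjSub g J := Subgroup.map_mono hKJ
  have : conjSub g K ⊓ (conjSub g J ⊓ L) = conjSub g K ⊓ L := by
    rw [← inf_assoc, inf_eq_left.mpr hKJc]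
  rw [this] at s1
  exact htrans _ _ _ s1 s2
end

section
/- Let m : G → G' be an injective homomorphism between finite groups and let ⇝ be a G'-transfer system. Then the relation on Sub(G) defined by K R H iff (m(K), m(H)) ∈ ⇝ is a G-transfer system. -/
theorem stmt6 {G G' : Type*} [Group G] [Group G'] [Finite G] [Finite G']
    (m : G →* G') (hm : Function.Injective m)
    (W : Subgroup G' → Subgroup G' → Prop) (hW : IsTransferSystem W) :
    IsTransferSystem (fun K H : Subgroup G => W (K.map m) (H.map m)) := by
  obtain ⟨hrefl, hanti, htrans, hle, hconj, hres⟩ := hW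
  have hmap_conj : ∀ (g : G) (K : Subgroup G),
      (conjSub g K).map m = conjSub (m g) (K.map m) := by
    intro g K
    simp only [conjSub, Subgroup.map_map]
    congr 1
    ext x
    simp [MulAut.conj, map_mul, map_inv]
  refine ⟨fun H => hrefl _, ?_, fun K J H h1 h2 => htrans h1 h2, ?_, ?_, ?_⟩
  · intro K H h1 h2
    exact Subgroup.map_injective hm (hanti h1 h2)
  · intro K H h
    have := hle h
    exact (Subgroup.map_le_map_iff_of_injective hm).mp this
  · intro K H g h
    simp only [hmap_conj]
    exact hconj (m g) h
  · intro K H h L hL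
    have := hres h (Subgroup.map_mono (f := m) hL)
    rwa [← Subgroup.map_inf _ _ _ hm] at this
end

section
/- Let m : G → G' be an injective homomorphism between finite groups and ⇝ a G'-transfer system. Then for subgroups K ⊆ H of G, (m(K), m(H)) ∈ ⇝ if and only if there exist subgroups K' ⇝ H' of G' with K = m⁻¹(K') and H = m⁻¹(H'). -/
theorem stmt7 {G G' : Type*} [Group G] [Group G'] [Finite G] [Finite G']
    (m : G →* G') (hm : Function.Injective m)
    (W : Subgroup G' → Subgroup G' → Prop) (hW : IsTransferSystem W)
    (K H : Subgroup G) (hKH : K ≤ H) :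
    W (K.map m) (H.map m) ↔
      ∃ K' H' : Subgroup G', W K' H' ∧ K = K'.comap m ∧ H = H'.comap m := by
  obtain ⟨hrefl, hanti, htrans, hle, hconj, hres⟩ := hW
  constructor
  · intro h
    exact ⟨K.map m, H.map m, h, (Subgroup.comap_map_eq_self_of_injective hm K).symm,
      (Subgroup.comap_map_eq_self_of_injective hm H).symm⟩
  · rintro ⟨K', H', hW', rfl, rfl⟩
    have hK'H' : K' ≤ H' := hle hW'
    have hL : (H'.comap m).map m ≤ H' := Subgroup.map_comap_le m H'
    have := hres hW' hL
    have hmc : ∀ S : Subgroup G', (S.comap m).map m = m.range ⊓ S := fun S =>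
      Subgroup.map_comap_eq m S
    simp only [hmc] at this ⊢
    have : W (m.range ⊓ H' ⊓ K') (m.range ⊓ H') := this
    rwa [inf_assoc, inf_eq_right.mpr hK'H'] at this
end

section
/- Let f : G → G' be a homomorphism between finite groups and → a G-transfer system. Then the set of pairs {(f(K), f(H)) : K → H} of subgroups of G' is closed under restriction: if K → H and L' ⊆ f(H), then (f(K) ∩ L', L') is again of the form (f(K₀), f(H₀)) for some K₀ → H₀. -/
theorem stmt9 {G G' : Type*} [Group G] [Group G'] [Finite G] [Finite G']
    (f : G →* G')
    (T : Subgroup G → Subgroup G → Prop) (hT : IsTransferSystem T)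
    (K H : Subgroup G) (h : T K H)
    (L' : Subgroup G') (hL : L' ≤ H.map f) :
    ∃ K₀ H₀ : Subgroup G, T K₀ H₀ ∧
      K₀.map f = K.map f ⊓ L' ∧ H₀.map f = L' := by
  obtain ⟨-, -, -, hle, -, hres⟩ := hT
  set H₀ : Subgroup G := H ⊓ L'.comap f with hH0
  refine ⟨H₀ ⊓ K, H₀, hres h inf_le_left, ?_, ?_⟩
  · apply le_antisymm
    · rintro x ⟨k, ⟨⟨-, hk2⟩, hk3⟩, rfl⟩
      exact ⟨⟨k, hk3, rfl⟩, hk2⟩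
    · rintro x ⟨⟨k, hkK, rfl⟩, hxL⟩
      exact ⟨k, ⟨⟨hle h hkK, hxL⟩, hkK⟩, rfl⟩
  · apply le_antisymm
    · rintro x ⟨k, ⟨-, hk2⟩, rfl⟩; exact hk2
    · intro x hx
      obtain ⟨k, hkH, rfl⟩ := hL hx
      exact ⟨k, ⟨hkH, hx⟩, rfl⟩
end

section
/- Let F : Sub(G) → Sub(G') be an inclusion-preserving map between subgroup posets of finite groups. Define F_L(→) as the transfer system generated by {(F(K), F(H)) : K → H} for a G-transfer system →, and F⁻¹_R(⇝) as the largest transfer system contained in {(K,H) : K ⊆ H and F(K) ⇝ F(H)} for a G'-transfer system ⇝. Then F_L is left adjoint to F⁻¹_R as monotone maps between the lattices of transfer systems: F_L(→) refines ⇝ if and only if → refines F⁻¹_R(⇝). -/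
/-- The largest transfer system contained in the partial order
`K ≤ H ∧ W (f K) (f H)`, for an inclusion-preserving map `F` on subgroups. -/
def invRgen {G G' : Type*} [Group G] [Group G'] (F : Subgroup G → Subgroup G')
    (W : Subgroup G' → Subgroup G' → Prop) (K H : Subgroup G) : Prop :=
  K ≤ H ∧ ∀ (g : G) (L : Subgroup G), L ≤ conjSub g H →
    (conjSub g K ⊓ L ≤ L ∧ W (F (conjSub g K ⊓ L)) (F L))

lemma conjSub_one {G : Type*} [Group G] (K : Subgroup G) : conjSub (1 : G) K = K := by
  ext x
  simp [conjSub]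

theorem stmt14 {G G' : Type*} [Group G] [Group G'] [Finite G] [Finite G']
    (F : Subgroup G → Subgroup G') (hF : Monotone F)
    (T : Subgroup G → Subgroup G → Prop) (hT : IsTransferSystem T)
    (W : Subgroup G' → Subgroup G' → Prop) (hW : IsTransferSystem W)
    (TL : Subgroup G' → Subgroup G' → Prop)
    (hTL : IsGenBy TL (fun A B => ∃ K H : Subgroup G, T K H ∧ A = F K ∧ B = F H)) :
    (∀ A B, TL A B → W A B) ↔ (∀ K H, T K H → invRgen F W K H) := by
  obtain ⟨hTLsys, hgen, hmin⟩ := hTL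
  constructor
  · intro h K H hKH
    refine ⟨hT.2.2.2.1 hKH, fun g L hL => ?_⟩
    have h1 : T (conjSub g K) (conjSub g H) := hT.2.2.2.2.1 g hKH
    have h2 : T (L ⊓ conjSub g K) L := hT.2.2.2.2.2 h1 hL
    rw [inf_comm] at h2
    refine ⟨hT.2.2.2.1 h2, h _ _ (hgen _ _ ⟨_, _, h2, rfl, rfl⟩)⟩
  · intro h A B hAB
    refine hmin W hW ?_ A B hAB
    rintro A B ⟨K, H, hKH, rfl, rfl⟩
    obtain ⟨hle, hprop⟩ := h K H hKH
    have hone : conjSub (1 : G) H = H := conjSub_one H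
    have := hprop 1 H (by rw [hone])
    rw [conjSub_one K, inf_eq_left.mpr hle] at this
    exact this.2
end

section
/- Let h : G → G' and k : G' → G'' be homomorphisms between finite groups. Then for every G-transfer system →, one has k_L(h_L(→)) = (k∘h)_L(→), where for a homomorphism f, f_L(→) denotes the transfer system generated by the image pairs {(f(K), f(H)) : K → H}. -/
section Helpers

variable {G G' : Type*} [Group G] [Group G']

lemma map_comap_inf (f : G →* G') (L : Subgroup G') (K : Subgroup G) :
    ((L.comap f) ⊓ K).map f = L ⊓ K.map f := by
  ext x
  simp only [Subgroup.mem_map, Subgroup.mem_inf, Subgroup.mem_comap]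
  constructor
  · rintro ⟨y, ⟨h1, h2⟩, rfl⟩; exact ⟨h1, y, h2, rfl⟩
  · rintro ⟨h1, y, h2, rfl⟩; exact ⟨y, ⟨h1, h2⟩, rfl⟩

lemma conjSub_map (f : G →* G') (g : G) (A : Subgroup G) :
    (conjSub g A).map f = conjSub (f g) (A.map f) := by
  unfold conjSub
  rw [Subgroup.map_map, Subgroup.map_map]
  congr 1
  ext x
  simp

lemma conjSub_inf_s15 (g : G) (A B : Subgroup G) :
    conjSub g (A ⊓ B) = conjSub g A ⊓ conjSub g B :=
  Subgroup.map_inf A B _ (MulAut.conj g).injective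

lemma conjSub_conjSub_inv (g : G) (L : Subgroup G) :
    conjSub g (conjSub g⁻¹ L) = L := by
  unfold conjSub
  rw [Subgroup.map_map]
  convert Subgroup.map_id L using 2
  ext x
  simp [mul_assoc]

lemma conjSub_inv_conjSub (g : G) (L : Subgroup G) :
    conjSub g⁻¹ (conjSub g L) = L := by
  simpa using conjSub_conjSub_inv g⁻¹ L

end Helpers

theorem stmt15 {G G' G'' : Type*} [Group G] [Group G'] [Group G'']
    [Finite G] [Finite G'] [Finite G'']
    (h : G →* G') (k : G' →* G'')
    (T : Subgroup G → Subgroup G → Prop) (hT : IsTransferSystem T)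
    (TL1 : Subgroup G' → Subgroup G' → Prop)
    (hTL1 : IsGenBy TL1 (fun A B => ∃ K H : Subgroup G, T K H ∧ A = K.map h ∧ B = H.map h))
    (TL2 : Subgroup G'' → Subgroup G'' → Prop)
    (hTL2 : IsGenBy TL2 (fun A B => ∃ A' B' : Subgroup G', TL1 A' B' ∧ A = A'.map k ∧ B = B'.map k))
    (TL3 : Subgroup G'' → Subgroup G'' → Prop)
    (hTL3 : IsGenBy TL3 (fun A B => ∃ K H : Subgroup G, T K H ∧
      A = K.map (k.comp h) ∧ B = H.map (k.comp h))) :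
    ∀ A B, TL2 A B ↔ TL3 A B := by
  obtain ⟨hT1sys, hT1gen, hT1min⟩ := hTL1
  obtain ⟨hT2sys, hT2gen, hT2min⟩ := hTL2
  obtain ⟨hT3sys, hT3gen, hT3min⟩ := hTL3
  obtain ⟨T3refl, T3anti, T3trans, T3le, T3conj, T3res⟩ := hT3sys
  -- direction TL3 ⊆ TL2 : generators of TL3 lie in TL2
  have h32 : ∀ A B, TL3 A B → TL2 A B := by
    refine hT3min TL2 hT2sys ?_
    rintro A B ⟨K, H, hKH, rfl, rfl⟩
    have := hT2gen (K.map h |>.map k) (H.map h |>.map k)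
      ⟨K.map h, H.map h, hT1gen _ _ ⟨K, H, hKH, rfl, rfl⟩, rfl, rfl⟩
    simpa [Subgroup.map_map] using this
  -- the auxiliary transfer system S on G'
  set S : Subgroup G' → Subgroup G' → Prop :=
    fun A B => A ≤ B ∧ ∀ L ≤ B, TL3 ((L ⊓ A).map k) (L.map k) with hSdef
  have hSsys : IsTransferSystem S := by
    refine ⟨?_, ?_, ?_, ?_, ?_, ?_⟩
    · intro H
      exact ⟨le_rfl, fun L hL => by rw [inf_eq_left.mpr hL]; exact T3refl _⟩
    · intro K H h1 h2
      exact le_antisymm h1.1 h2.1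
    · rintro K J H ⟨hKJ, hK⟩ ⟨hJH, hJ⟩
      refine ⟨hKJ.trans hJH, fun L hL => ?_⟩
      have h2 := hJ L hL
      have h1 := hK (L ⊓ J) inf_le_right
      rw [inf_assoc, inf_eq_right.mpr hKJ] at h1
      exact T3trans h1 h2
    · rintro K H ⟨h1, _⟩; exact h1
    · rintro A B g ⟨hAB, hA⟩
      refine ⟨Subgroup.map_mono hAB, fun L hL => ?_⟩
      have hL' : conjSub g⁻¹ L ≤ B := by
        have h2 : conjSub g⁻¹ L ≤ conjSub g⁻¹ (conjSub g B) := Subgroup.map_mono hL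
        rwa [conjSub_inv_conjSub] at h2
      have h1 := hA (conjSub g⁻¹ L) hL'
      have h2 := T3conj (k g) h1
      rwa [← conjSub_map, ← conjSub_map, conjSub_inf_s15, conjSub_conjSub_inv] at h2
    · rintro A B ⟨hAB, hA⟩ L hL
      refine ⟨inf_le_left, fun M hM => ?_⟩
      have := hA M (hM.trans hL)
      rwa [show M ⊓ A = M ⊓ (L ⊓ A) from by rw [← inf_assoc, inf_eq_left.mpr hM]] at this
  -- S contains the generators of TL1
  have hSgen : ∀ A B, (∃ K H : Subgroup G, T K H ∧ A = K.map h ∧ B = H.map h) → S A B := by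
    rintro A B ⟨K, H, hKH, rfl, rfl⟩
    refine ⟨Subgroup.map_mono (hT.2.2.2.1 hKH), fun L hL => ?_⟩
    have hres : T ((L.comap h ⊓ H) ⊓ K) (L.comap h ⊓ H) :=
      hT.2.2.2.2.2 hKH inf_le_right
    have hgen := hT3gen _ _ ⟨_, _, hres, rfl, rfl⟩
    have e1 : ((L.comap h ⊓ H) ⊓ K).map (k.comp h) = ((L ⊓ K.map h)).map k := by
      rw [← Subgroup.map_map, inf_assoc, inf_eq_right.mpr (hT.2.2.2.1 hKH),
        map_comap_inf]
    have e2 : (L.comap h ⊓ H).map (k.comp h) = L.map k := by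
      rw [← Subgroup.map_map, map_comap_inf, inf_eq_left.mpr hL]
    rwa [e1, e2] at hgen
  have hS : ∀ A B, TL1 A B → S A B := hT1min S hSsys hSgen
  -- direction TL2 ⊆ TL3
  have h23 : ∀ A B, TL2 A B → TL3 A B := by
    refine hT2min TL3 ⟨T3refl, T3anti, T3trans, T3le, T3conj, T3res⟩ ?_
    rintro A B ⟨A', B', h1, rfl, rfl⟩
    obtain ⟨hle, hall⟩ := hS _ _ h1
    have := hall B' le_rfl
    rwa [inf_eq_right.mpr hle] at this
  exact fun A B => ⟨h23 A B, h32 A B⟩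
end

section
/- Let i : H ↪ G be the inclusion of a subgroup of a finite group, let = denote the trivial (discrete) H-transfer system, and let → = i_R(=) be the largest G-transfer system contained in the partial order {(J,K) : J ⊆ K and J ∩ H = K ∩ H}. Then for subgroups J ⊆ K of G, J → K holds if and only if K ∩ ⋃_{g ∈ G} g⁻¹Hg ⊆ J. -/
theorem stmt19 {G : Type*} [Group G] [Finite G] (H : Subgroup G)
    (J K : Subgroup G) (hJK : J ≤ K) :
    (J ≤ K ∧ ∀ (g : G) (L : Subgroup G), L ≤ conjSub g K →
      (conjSub g J ⊓ L ≤ L ∧ (conjSub g J ⊓ L) ⊓ H = L ⊓ H)) ↔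
    (∀ x ∈ K, (∃ g : G, g * x * g⁻¹ ∈ H) → x ∈ J) := by
  constructor
  · rintro ⟨-, h⟩ x hx ⟨g, hg⟩
    set y := g * x * g⁻¹ with hy
    have hxy : g⁻¹ * y * g = x := by rw [hy]; group
    have hyK : y ∈ conjSub g K := mem_conjSub.mpr (by rw [hxy]; exact hx)
    have hL : Subgroup.zpowers y ≤ conjSub g K := by
      rw [Subgroup.zpowers_le]; exact hyK
    have := (h g (Subgroup.zpowers y) hL).2
    have hyLH : y ∈ Subgroup.zpowers y ⊓ H := ⟨Subgroup.mem_zpowers y, hg⟩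
    rw [← this] at hyLH
    have : y ∈ conjSub g J := hyLH.1.1
    have := mem_conjSub.mp this
    rwa [hxy] at this
  · intro h
    refine ⟨hJK, fun g L hL => ⟨inf_le_right, le_antisymm ?_ ?_⟩⟩
    · exact inf_le_inf_right H inf_le_right
    · rintro y ⟨hyL, hyH⟩
      have hyK : g⁻¹ * y * g ∈ K := mem_conjSub.mp (hL hyL)
      have hconj : g * (g⁻¹ * y * g) * g⁻¹ = y := by group
      have hyJ : g⁻¹ * y * g ∈ J := h _ hyK ⟨g, by rwa [hconj]⟩
      exact ⟨⟨mem_conjSub.mpr hyJ, hyL⟩, hyH⟩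
end
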